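/- Let G be a {P3 ∪ P2, diamond}-free graph with ω(G) = 4 and maximum clique A = {v1,v2,v3,v4}, such that every vertex outside A has at most one neighbor in A. If a and b are two adjacent vertices each nonadjacent to v1 and v3 (i.e., a, b ∈ C_{1,3}), then every vertex nonadjacent to both v2 and v3 (i.e., in C_{2,3}) yields a contradiction; hence C_{2,3} = ∅. -/

import Mathlib

open SimpleGraph

/-- The join of two graphs: all cross edges present. -/
def joinG {α β : Type*} (G : SimpleGraph α) (H : SimpleGraph β) : SimpleGraph (α ⊕ β) :=
  SimpleGraph.fromRel (fun x y => match x, y with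
    | Sum.inl a, Sum.inl b => G.Adj a b
    | Sum.inr a, Sum.inr b => H.Adj a b
    | Sum.inl _, Sum.inr _ => True
    | _, _ => False)

/-- The graph `P₃ ∪ P₂`: disjoint union of a path on 3 vertices and an edge. -/
def P3P2 : SimpleGraph (Fin 3 ⊕ Fin 2) := pathGraph 3 ⊕g pathGraph 2

/-- The graph `K₁ ∪ K₂`: disjoint union of a vertex and an edge. -/
def K1K2 : SimpleGraph (Fin 1 ⊕ Fin 2) := (⊥ : SimpleGraph (Fin 1)) ⊕g (⊤ : SimpleGraph (Fin 2))

/-- The graph `(K₁ ∪ K₂) + Kₚ`: join of `K₁ ∪ K₂` with a complete graph on `p` vertices. -/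
def K1K2Kp (p : ℕ) : SimpleGraph ((Fin 1 ⊕ Fin 2) ⊕ Fin p) := joinG K1K2 (⊤ : SimpleGraph (Fin p))

/-- The graph `2K₁ + Kₚ`: join of two isolated vertices with a complete graph on `p` vertices. -/
def twoK1Kp (p : ℕ) : SimpleGraph (Fin 2 ⊕ Fin p) :=
  joinG (⊥ : SimpleGraph (Fin 2)) (⊤ : SimpleGraph (Fin p))

/-- The HVN graph: `(K₁ ∪ K₂) + K₂`. -/
def HVN : SimpleGraph ((Fin 1 ⊕ Fin 2) ⊕ Fin 2) := K1K2Kp 2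

/-- The diamond: `2K₁ + K₂`, i.e. `K₄` minus an edge. -/
def diamond : SimpleGraph (Fin 2 ⊕ Fin 2) := twoK1Kp 2

/-- The paw: `(K₁ ∪ K₂) + K₁`. -/
def paw : SimpleGraph ((Fin 1 ⊕ Fin 2) ⊕ Fin 1) := K1K2Kp 1

/-- `G` is `H`-free if it has no induced subgraph isomorphic to `H`,
i.e. there is no graph embedding of `H` into `G`. -/
def Free {α β : Type*} (H : SimpleGraph α) (G : SimpleGraph β) : Prop :=
  ¬ Nonempty (H ↪g G)

/-! The one-neighbour condition forces `a` and `b` to see only `v2` in `A`, and `x` only `v1`.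
If `x` is adjacent to both `a` and `b`, then `x` and `v2` together with the edge `ab` induce a
diamond. If `x` is adjacent to exactly one of them, the path through `a`, `b`, `x` and the edge
`v3v4` induce `P₃ ∪ P₂`; if to neither, so do the path `x v1 v3` and the edge `ab`. -/

theorem Set.ncard_insert_insert_insert_le {α : Type*} (a b c : α) :
    ({a, b, c} : Set α).ncard ≤ 3 :=
  (Set.ncard_insert_le _ _).trans <| Nat.succ_le_succ <|
    (Set.ncard_insert_le _ _).trans <| by rw [Set.ncard_singleton]

theorem Set.pairwise_ne_of_ncard_eq_four {α : Type*} {a b c d : α}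
    (h : ({a, b, c, d} : Set α).ncard = 4) :
    a ≠ b ∧ a ≠ c ∧ a ≠ d ∧ b ≠ c ∧ b ≠ d ∧ c ≠ d := by
  by_contra hne
  simp only [not_and_or, not_not] at hne
  have := Set.ncard_insert_insert_insert_le a c d
  have := Set.ncard_insert_insert_insert_le a b d
  have := Set.ncard_insert_insert_insert_le a b c
  have := Set.ncard_insert_insert_insert_le b c d
  obtain rfl | rfl | rfl | rfl | rfl | rfl := hne <;> simp_all

namespace SimpleGraph

variable {V : Type*} {G : SimpleGraph V}

theorem eq_of_adj_of_ncard_adj_le_one {s : Set V} (hs : s.Finite) {y z w : V}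
    (h : {u ∈ s | G.Adj y u}.ncard ≤ 1) (hz : z ∈ s) (hw : w ∈ s)
    (hyz : G.Adj y z) (hyw : G.Adj y w) : z = w :=
  (Set.ncard_le_one (hs.subset (Set.sep_subset _ _))).1 h z ⟨hz, hyz⟩ w ⟨hw, hyw⟩

theorem not_free_P3P2 {p₀ p₁ p₂ q₀ q₁ : V}
    (h₀₁ : G.Adj p₀ p₁) (h₁₂ : G.Adj p₁ p₂) (h₀₂ : ¬ G.Adj p₀ p₂) (hne : p₀ ≠ p₂)
    (hq : G.Adj q₀ q₁) (n₀₀ : ¬ G.Adj p₀ q₀) (n₀₁ : ¬ G.Adj p₀ q₁) (n₁₀ : ¬ G.Adj p₁ q₀)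
    (n₁₁ : ¬ G.Adj p₁ q₁) (n₂₀ : ¬ G.Adj p₂ q₀) (n₂₁ : ¬ G.Adj p₂ q₁) :
    ¬ _root_.Free P3P2 G := by
  refine not_not.2 ⟨⟨⟨Sum.elim ![p₀, p₁, p₂] ![q₀, q₁], ?_⟩, ?_⟩⟩
  · rintro (i | i) (j | j) h <;> fin_cases i <;> fin_cases j <;> simp at h <;>
      grind [G.adj_comm, G.irrefl]
  · intro u v
    change G.Adj (Sum.elim _ _ u) (Sum.elim _ _ v) ↔ _
    rcases u with u | u <;> rcases v with v | v <;> fin_cases u <;> fin_cases v <;>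
      simp_all [P3P2, pathGraph_adj, G.adj_comm]

theorem not_free_diamond {d₀ d₁ e₀ e₁ : V}
    (hd : ¬ G.Adj d₀ d₁) (hne : d₀ ≠ d₁) (he : G.Adj e₀ e₁)
    (h₀₀ : G.Adj d₀ e₀) (h₀₁ : G.Adj d₀ e₁) (h₁₀ : G.Adj d₁ e₀) (h₁₁ : G.Adj d₁ e₁) :
    ¬ _root_.Free diamond G := by
  refine not_not.2 ⟨⟨⟨Sum.elim ![d₀, d₁] ![e₀, e₁], ?_⟩, ?_⟩⟩
  · rintro (i | i) (j | j) h <;> fin_cases i <;> fin_cases j <;> simp at h <;>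
      grind [G.adj_comm, G.irrefl]
  · intro u v
    change G.Adj (Sum.elim _ _ u) (Sum.elim _ _ v) ↔ _
    rcases u with u | u <;> rcases v with v | v <;> fin_cases u <;> fin_cases v <;>
      simp_all [diamond, twoK1Kp, joinG, G.adj_comm]

end SimpleGraph

theorem stmt_19_general {V : Type*} (G : SimpleGraph V)
    (hf1 : _root_.Free P3P2 G) (hf2 : _root_.Free diamond G)
    (v1 v2 v3 v4 : V)
    (hA : G.IsClique ({v1, v2, v3, v4} : Set V))
    (hcard : ({v1, v2, v3, v4} : Set V).ncard = 4)
    (hone : ∀ x, x ∉ ({v1, v2, v3, v4} : Set V) →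
        ({y ∈ ({v1, v2, v3, v4} : Set V) | G.Adj x y}).ncard ≤ 1)
    (a b : V) (hab : G.Adj a b)
    (haA : a ∉ ({v1, v2, v3, v4} : Set V)) (hbA : b ∉ ({v1, v2, v3, v4} : Set V))
    (ha1 : ¬ G.Adj a v1) (ha3 : ¬ G.Adj a v3) (ha2 : G.Adj a v2)
    (hb1 : ¬ G.Adj b v1) (hb3 : ¬ G.Adj b v3) (hb2 : G.Adj b v2)
    (x : V) (hxA : x ∉ ({v1, v2, v3, v4} : Set V))
    (hx2 : ¬ G.Adj x v2) (hx3 : ¬ G.Adj x v3) (hx1 : G.Adj x v1) : False := by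
  obtain ⟨-, h13, h14, -, h24, h34⟩ := Set.pairwise_ne_of_ncard_eq_four hcard
  have adj13 : G.Adj v1 v3 := hA (by simp) (by simp) h13
  have adj34 : G.Adj v3 v4 := hA (by simp) (by simp) h34
  set A : Set V := {v1, v2, v3, v4}
  have one_nbr : ∀ y ∉ A, ∀ z w, z ∈ A → w ∈ A → G.Adj y z → G.Adj y w → z = w :=
    fun y hy _ _ ↦ eq_of_adj_of_ncard_adj_le_one (Set.toFinite _) (hone y hy)
  have ha4 : ¬ G.Adj a v4 :=
    fun h ↦ h24 (one_nbr a haA v2 v4 (by simp [A]) (by simp [A]) ha2 h)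
  have hb4 : ¬ G.Adj b v4 :=
    fun h ↦ h24 (one_nbr b hbA v2 v4 (by simp [A]) (by simp [A]) hb2 h)
  have hx4 : ¬ G.Adj x v4 :=
    fun h ↦ h14 (one_nbr x hxA v1 v4 (by simp [A]) (by simp [A]) hx1 h)
  have hbx : b ≠ x := by rintro rfl; exact hb1 hx1
  by_cases hxa : G.Adj x a <;> by_cases hxb : G.Adj x b
  · exact not_free_diamond hx2 (by rintro rfl; simp [A] at hxA) hab hxa hxb ha2.symm hb2.symm
      hf2
  · exact not_free_P3P2 hab.symm hxa.symm (mt Adj.symm hxb) hbx adj34 hb3 hb4 ha3 ha4 hx3 hx4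
      hf1
  · exact not_free_P3P2 hab hxb.symm (mt Adj.symm hxa) (by rintro rfl; exact ha1 hx1)
      adj34 ha3 ha4 hb3 hb4 hx3 hx4 hf1
  · exact not_free_P3P2 hx1 adj13 hx3 (by rintro rfl; simp [A] at hxA) hab hxa hxb
      (mt Adj.symm ha1) (mt Adj.symm hb1) (mt Adj.symm ha3) (mt Adj.symm hb3) hf1

theorem stmt_19 {V : Type*} [Fintype V] (G : SimpleGraph V)
    (hf1 : _root_.Free P3P2 G) (hf2 : _root_.Free diamond G) (hω : G.cliqueNum = 4)
    (v1 v2 v3 v4 : V)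
    (hA : G.IsClique ({v1, v2, v3, v4} : Set V))
    (hcard : ({v1, v2, v3, v4} : Set V).ncard = 4)
    (hone : ∀ x, x ∉ ({v1, v2, v3, v4} : Set V) →
        ({y ∈ ({v1, v2, v3, v4} : Set V) | G.Adj x y}).ncard ≤ 1)
    (a b : V) (hab : G.Adj a b)
    (haA : a ∉ ({v1, v2, v3, v4} : Set V)) (hbA : b ∉ ({v1, v2, v3, v4} : Set V))
    (ha1 : ¬ G.Adj a v1) (ha3 : ¬ G.Adj a v3) (ha2 : G.Adj a v2)
    (hb1 : ¬ G.Adj b v1) (hb3 : ¬ G.Adj b v3) (hb2 : G.Adj b v2)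
    (x : V) (hxA : x ∉ ({v1, v2, v3, v4} : Set V))
    (hx2 : ¬ G.Adj x v2) (hx3 : ¬ G.Adj x v3) (hx1 : G.Adj x v1) : False :=
  stmt_19_general G hf1 hf2 v1 v2 v3 v4 hA hcard hone a b hab haA hbA ha1 ha3 ha2 hb1 hb3 hb2 x hxA
    hx2 hx3 hx1
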